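/- arXiv:2209.07815 — 2 statements merged into one kernel-verified Lean document; each statement's English description precedes it below -/
import Mathlib

section
/- Let x ∈ R^d be a random vector with finite fourth moments: sup_{‖ν‖₂=1} E[(νᵀx)⁴] ≤ R. For τ > 0, let x̃ = min{‖x‖₄, τ}·x/‖x‖₄ be its ℓ₄-norm shrinkage. Then the bias of the second moment satisfies ‖E[x̃ x̃ᵀ] − E[x xᵀ]‖₂ ≤ R√d / τ², where ‖·‖₂ is the spectral norm. -/
open MeasureTheory Real

/-- The `ℓ₄` norm of a vector in `ℝ^d`. -/
noncomputable def l4Norm {d : ℕ} (v : EuclideanSpace ℝ (Fin d)) : ℝ :=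
  (∑ i, |v i| ^ 4) ^ ((1 : ℝ) / 4)

/-- The `ℓ₄`-norm shrinkage `x̃ = min(‖x‖₄, τ) · x / ‖x‖₄`. -/
noncomputable def l4Shrink {d : ℕ} (τ : ℝ) (v : EuclideanSpace ℝ (Fin d)) :
    EuclideanSpace ℝ (Fin d) :=
  (min (l4Norm v) τ / l4Norm v) • v

lemma l4Norm_nonneg {d : ℕ} (v : EuclideanSpace ℝ (Fin d)) : 0 ≤ l4Norm v :=
  Real.rpow_nonneg (Finset.sum_nonneg fun i _ => by positivity) _

lemma l4Norm_pow_four {d : ℕ} (v : EuclideanSpace ℝ (Fin d)) :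
    (l4Norm v) ^ 4 = ∑ i, (v i) ^ 4 := by
  have h : (0:ℝ) ≤ ∑ i, |v i| ^ 4 := Finset.sum_nonneg fun i _ => by positivity
  have : (l4Norm v) ^ 4 = ((∑ i, |v i| ^ 4) ^ ((1:ℝ)/4)) ^ ((4:ℕ):ℝ) := by
    rw [Real.rpow_natCast]; rfl
  rw [this, ← Real.rpow_mul h]
  norm_num
  exact Finset.sum_congr rfl fun i _ => by rw [← abs_pow, abs_of_nonneg (by positivity)]

lemma l4Norm_eq_zero {d : ℕ} {v : EuclideanSpace ℝ (Fin d)} (h : l4Norm v = 0) : v = 0 := by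
  have h4 : (l4Norm v) ^ 4 = 0 := by rw [h]; ring
  rw [l4Norm_pow_four] at h4
  have hz := (Finset.sum_eq_zero_iff_of_nonneg (fun i _ => by positivity)).1 h4
  ext i
  exact pow_eq_zero_iff (by norm_num) |>.1 (hz i (Finset.mem_univ i))

lemma shrink_pointwise {d : ℕ} {τ : ℝ} (hτ : 0 < τ) (ν v : EuclideanSpace ℝ (Fin d)) :
    0 ≤ (inner ℝ ν v : ℝ) ^ 2 - (inner ℝ ν (l4Shrink τ v) : ℝ) ^ 2 ∧
    (inner ℝ ν v : ℝ) ^ 2 - (inner ℝ ν (l4Shrink τ v) : ℝ) ^ 2 ≤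
      (inner ℝ ν v : ℝ) ^ 2 * (l4Norm v) ^ 2 / τ ^ 2 := by
  have hsm : (inner ℝ ν (l4Shrink τ v) : ℝ)
      = (min (l4Norm v) τ / l4Norm v) * inner ℝ ν v := real_inner_smul_right ν v _
  set t := l4Norm v with ht
  rcases eq_or_lt_of_le (l4Norm_nonneg v) with h0 | hpos
  · have hv : v = 0 := l4Norm_eq_zero h0.symm
    simp [hv, l4Shrink]
  · set c := min t τ / t with hc
    have hc0 : 0 ≤ c := div_nonneg (le_min hpos.le hτ.le) hpos.le
    have hc1 : c ≤ 1 := (div_le_one hpos).2 (min_le_left _ _)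
    have hkey : (inner ℝ ν v : ℝ) ^ 2 - (inner ℝ ν (l4Shrink τ v) : ℝ) ^ 2
        = (1 - c ^ 2) * (inner ℝ ν v : ℝ) ^ 2 := by rw [hsm]; ring
    constructor
    · rw [hkey]
      have h2 : (0:ℝ) ≤ 1 - c ^ 2 := by nlinarith
      exact mul_nonneg h2 (sq_nonneg _)
    · rw [hkey]
      rcases le_or_gt t τ with hle | hlt
      · have : c = 1 := by rw [hc, min_eq_left hle, div_self hpos.ne']
        rw [this]
        have : (0:ℝ) ≤ (inner ℝ ν v : ℝ) ^ 2 * t ^ 2 / τ ^ 2 := by positivity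
        nlinarith
      · have h1 : (1 : ℝ) ≤ t ^ 2 / τ ^ 2 := by
          rw [le_div_iff₀ (by positivity)]
          nlinarith
        have h2 : 1 - c ^ 2 ≤ 1 := by nlinarith
        calc (1 - c ^ 2) * (inner ℝ ν v : ℝ) ^ 2 ≤ 1 * (inner ℝ ν v : ℝ) ^ 2 := by
              nlinarith [sq_nonneg (inner ℝ ν v : ℝ)]
          _ ≤ (inner ℝ ν v : ℝ) ^ 2 * (t ^ 2 / τ ^ 2) := by
              nlinarith [sq_nonneg (inner ℝ ν v : ℝ)]
          _ = (inner ℝ ν v : ℝ) ^ 2 * t ^ 2 / τ ^ 2 := by ring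

/-- Bias of the second moment under `ℓ₄`-norm shrinkage: if
`sup_{‖ν‖=1} E[(νᵀx)⁴] ≤ R` and `x̃` is the `ℓ₄`-shrinkage of `x` at level
`τ > 0`, then `‖E[x̃ x̃ᵀ] − E[x xᵀ]‖₂ ≤ R√d/τ²` (spectral norm, expressed via
quadratic forms). -/
theorem l4_shrinkage_second_moment_bias
    {Ω : Type*} [MeasurableSpace Ω] (μ : Measure Ω) [IsProbabilityMeasure μ]
    {d : ℕ} (x : Ω → EuclideanSpace ℝ (Fin d)) (hmeas : Measurable x)
    (R τ : ℝ) (hτ : 0 < τ)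
    (hint4 : ∀ ν : EuclideanSpace ℝ (Fin d),
      Integrable (fun ω => (inner ℝ ν (x ω) : ℝ) ^ 4) μ)
    (h4 : ∀ ν : EuclideanSpace ℝ (Fin d), ‖ν‖ = 1 →
      ∫ ω, (inner ℝ ν (x ω) : ℝ) ^ 4 ∂μ ≤ R) :
    ∀ ν : EuclideanSpace ℝ (Fin d), ‖ν‖ = 1 →
      |(∫ ω, (inner ℝ ν (l4Shrink τ (x ω)) : ℝ) ^ 2 ∂μ) -
        (∫ ω, (inner ℝ ν (x ω) : ℝ) ^ 2 ∂μ)| ≤ R * Real.sqrt d / τ ^ 2 := by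
  intro ν hν
  -- dimension is positive
  rcases Nat.eq_zero_or_pos d with hd0 | hd
  · exfalso
    subst hd0
    have hν0 : ν = 0 := Subsingleton.elim ν 0
    rw [hν0, norm_zero] at hν
    exact one_ne_zero hν.symm
  set s : ℝ := Real.sqrt d with hs
  have hspos : 0 < s := Real.sqrt_pos.2 (by exact_mod_cast hd)
  have hs2 : s ^ 2 = d := Real.sq_sqrt (by positivity)
  have hR : 0 ≤ R :=
    le_trans (integral_nonneg fun ω => by positivity) (h4 ν hν)
  set F : Ω → ℝ := fun ω => inner ℝ ν (x ω) with hF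
  set S : Ω → ℝ := fun ω => inner ℝ ν (l4Shrink τ (x ω)) with hS
  set G : Ω → ℝ := fun ω => l4Norm (x ω) with hG
  -- measurability
  have hFmeas : Measurable F := by
    apply Measurable.inner measurable_const hmeas
  have hGmeas : Measurable G :=
    (Real.continuous_rpow_const (by norm_num : (0:ℝ) ≤ 1/4)).measurable.comp
      (Finset.measurable_sum Finset.univ fun i _ =>
        (((measurable_pi_apply i).comp ((WithLp.measurable_ofLp 2 _).comp hmeas)).abs.pow_const 4))
  have hSrw : ∀ ω, S ω = (min (G ω) τ / G ω) * F ω := fun ω =>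
    real_inner_smul_right ν (x ω) _
  have hSmeas : Measurable S := by
    have : S = fun ω => (min (G ω) τ / G ω) * F ω := funext hSrw
    rw [this]
    exact ((hGmeas.min measurable_const).div hGmeas).mul hFmeas
  -- integrability
  have hF4 : Integrable (fun ω => F ω ^ 4) μ := hint4 ν
  have hGrw : ∀ ω, G ω ^ 4
      = ∑ i, (inner ℝ (EuclideanSpace.single i (1:ℝ)) (x ω) : ℝ) ^ 4 := by
    intro ω
    rw [hG, l4Norm_pow_four]
    exact Finset.sum_congr rfl fun i _ => by
      simp [EuclideanSpace.inner_single_left]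
  have hG4 : Integrable (fun ω => G ω ^ 4) μ :=
    (integrable_finset_sum Finset.univ fun i _ =>
      hint4 (EuclideanSpace.single i 1)).congr (ae_of_all _ fun ω => (hGrw ω).symm)
  have hBle : ∫ ω, G ω ^ 4 ∂μ ≤ d * R := by
    have h1 : ∫ ω, G ω ^ 4 ∂μ
        = ∑ i, ∫ ω, (inner ℝ (EuclideanSpace.single i (1:ℝ)) (x ω) : ℝ) ^ 4 ∂μ := by
      rw [integral_congr_ae (ae_of_all _ hGrw)]
      exact integral_finset_sum _ fun i _ => hint4 _
    rw [h1]
    calc ∑ i : Fin d, ∫ ω, (inner ℝ (EuclideanSpace.single i (1:ℝ)) (x ω) : ℝ) ^ 4 ∂μ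
        ≤ ∑ i : Fin d, R := Finset.sum_le_sum fun i _ =>
          h4 _ (by simp [EuclideanSpace.norm_single])
      _ = d * R := by simp [Finset.sum_const, mul_comm]
  have hF2 : Integrable (fun ω => F ω ^ 2) μ := by
    refine Integrable.mono' (hF4.add (integrable_const 1))
      (hFmeas.pow_const 2).aestronglyMeasurable (ae_of_all _ fun ω => ?_)
    rw [Real.norm_eq_abs, abs_of_nonneg (sq_nonneg _)]
    simp only [Pi.add_apply]
    nlinarith [sq_nonneg (F ω ^ 2 - 1), sq_nonneg (F ω)]
  have hS2 : Integrable (fun ω => S ω ^ 2) μ := by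
    refine Integrable.mono' hF2 (hSmeas.pow_const 2).aestronglyMeasurable
      (ae_of_all _ fun ω => ?_)
    rw [Real.norm_eq_abs, abs_of_nonneg (sq_nonneg _)]
    linarith [(shrink_pointwise hτ ν (x ω)).1]
  have hFG : Integrable (fun ω => F ω ^ 2 * G ω ^ 2) μ := by
    refine Integrable.mono' (hF4.add hG4)
      ((hFmeas.pow_const 2).mul (hGmeas.pow_const 2)).aestronglyMeasurable
      (ae_of_all _ fun ω => ?_)
    rw [Real.norm_eq_abs, abs_of_nonneg (by positivity)]
    simp only [Pi.add_apply]
    nlinarith [sq_nonneg (F ω ^ 2 - G ω ^ 2), sq_nonneg (F ω), sq_nonneg (G ω)]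
  -- the difference is an integral of a nonnegative function
  have hsub : (∫ ω, S ω ^ 2 ∂μ) - ∫ ω, F ω ^ 2 ∂μ
      = -(∫ ω, (F ω ^ 2 - S ω ^ 2) ∂μ) := by
    rw [integral_sub hF2 hS2]; ring
  have hnn : 0 ≤ ∫ ω, (F ω ^ 2 - S ω ^ 2) ∂μ :=
    integral_nonneg fun ω => (shrink_pointwise hτ ν (x ω)).1
  rw [hsub, abs_neg, abs_of_nonneg hnn]
  -- bound the integral
  have step1 : ∫ ω, (F ω ^ 2 - S ω ^ 2) ∂μ
      ≤ ∫ ω, (F ω ^ 2 * G ω ^ 2 / τ ^ 2) ∂μ :=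
    integral_mono (hF2.sub hS2) (hFG.div_const _)
      (fun ω => (shrink_pointwise hτ ν (x ω)).2)
  have step2 : ∫ ω, (F ω ^ 2 * G ω ^ 2 / τ ^ 2) ∂μ
      = (∫ ω, F ω ^ 2 * G ω ^ 2 ∂μ) / τ ^ 2 := integral_div _ _
  -- AM-GM bound on the product integral
  have hpt : ∀ ω, F ω ^ 2 * G ω ^ 2 ≤ (s * F ω ^ 4 + s⁻¹ * G ω ^ 4) / 2 := by
    intro ω
    rw [le_div_iff₀ (by norm_num : (0:ℝ) < 2), ← mul_le_mul_iff_right₀ hspos]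
    have hrw : s * (s * F ω ^ 4 + s⁻¹ * G ω ^ 4) = s ^ 2 * F ω ^ 4 + G ω ^ 4 := by
      field_simp
    rw [hrw]
    nlinarith [sq_nonneg (s * F ω ^ 2 - G ω ^ 2)]
  have step3 : ∫ ω, F ω ^ 2 * G ω ^ 2 ∂μ ≤ R * s := by
    have h1 : ∫ ω, F ω ^ 2 * G ω ^ 2 ∂μ
        ≤ ∫ ω, (s * F ω ^ 4 + s⁻¹ * G ω ^ 4) / 2 ∂μ :=
      integral_mono hFG (((hF4.const_mul s).add (hG4.const_mul s⁻¹)).div_const 2) hpt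
    have h2 : ∫ ω, (s * F ω ^ 4 + s⁻¹ * G ω ^ 4) / 2 ∂μ
        = (s * (∫ ω, F ω ^ 4 ∂μ) + s⁻¹ * (∫ ω, G ω ^ 4 ∂μ)) / 2 := by
      rw [integral_div, integral_add (hF4.const_mul s) (hG4.const_mul s⁻¹),
        integral_const_mul, integral_const_mul]
    have hA : ∫ ω, F ω ^ 4 ∂μ ≤ R := h4 ν hν
    have hfin : (s * R + s⁻¹ * (d * R)) / 2 = R * s := by
      have : s⁻¹ * (d * R) = s * R := by
        rw [← hs2]; field_simp
      rw [this]; ring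
    calc ∫ ω, F ω ^ 2 * G ω ^ 2 ∂μ
        ≤ (s * (∫ ω, F ω ^ 4 ∂μ) + s⁻¹ * (∫ ω, G ω ^ 4 ∂μ)) / 2 := h2 ▸ h1
      _ ≤ (s * R + s⁻¹ * (d * R)) / 2 := by
          gcongr
      _ = R * s := hfin
  calc ∫ ω, (F ω ^ 2 - S ω ^ 2) ∂μ
      ≤ (∫ ω, F ω ^ 2 * G ω ^ 2 ∂μ) / τ ^ 2 := step2 ▸ step1
    _ ≤ R * s / τ ^ 2 := by gcongr
    _ = R * Real.sqrt d / τ ^ 2 := rfl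
end

section
/- Let x ∈ R^d satisfy sup_{‖ν‖₂=1} E[(νᵀx)⁴] ≤ R, and let x̃ = min{‖x‖₄, τ}·x/‖x‖₄ for τ > 0. Then the matrix x̃ x̃ᵀ satisfies ‖x̃ x̃ᵀ‖₂ ≤ √d τ² almost surely, and ‖E[(x̃ x̃ᵀ)²]‖₂ ≤ R d. -/
open MeasureTheory Real

lemma coeff_mem {d : ℕ} (v : EuclideanSpace ℝ (Fin d)) {τ : ℝ} (hτ : 0 < τ) :
    0 ≤ min (l4Norm v) τ / l4Norm v ∧ min (l4Norm v) τ / l4Norm v ≤ 1 := by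
  have h0 := l4Norm_nonneg v
  rcases eq_or_lt_of_le h0 with h | h
  · rw [← h]; simp
  · exact ⟨div_nonneg (le_min h0 hτ.le) h0, by rw [div_le_one h]; exact min_le_left _ _⟩

lemma euclid_norm_sq {d : ℕ} (v : EuclideanSpace ℝ (Fin d)) :
    ‖v‖ ^ 2 = ∑ i, (v i) ^ 2 := by
  rw [EuclideanSpace.norm_eq, Real.sq_sqrt (Finset.sum_nonneg fun i _ => by positivity)]
  exact Finset.sum_congr rfl fun i _ => by rw [Real.norm_eq_abs, sq_abs]

lemma norm_sq_le_sqrt_mul {d : ℕ} (v : EuclideanSpace ℝ (Fin d)) :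
    ‖v‖ ^ 2 ≤ Real.sqrt d * (l4Norm v) ^ 2 := by
  have hS : (0:ℝ) ≤ ∑ i, |v i| ^ 4 := Finset.sum_nonneg fun i _ => by positivity
  have h1 := euclid_norm_sq v
  have h2 : (l4Norm v) ^ 2 = Real.sqrt (∑ i, |v i| ^ 4) := by
    rw [l4Norm, ← Real.rpow_natCast (_ ^ ((1:ℝ)/4)) 2, ← Real.rpow_mul hS]
    rw [Real.sqrt_eq_rpow]; norm_num
  have habs : ∑ i, |v i| ^ 4 = ∑ i, (v i) ^ 4 :=
    Finset.sum_congr rfl fun i _ => by rw [← abs_pow, abs_of_nonneg (by positivity)]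
  have hcs : (∑ i, (v i) ^ 2) ^ 2 ≤ (d : ℝ) * ∑ i, |v i| ^ 4 := by
    rw [habs]
    have := sq_sum_le_card_mul_sum_sq (s := (Finset.univ : Finset (Fin d)))
      (f := fun i => (v i) ^ 2)
    simpa [← pow_mul, sq_abs, abs_pow] using this
  rw [h1, h2, ← Real.sqrt_mul (Nat.cast_nonneg d)]
  have := Real.sqrt_le_sqrt hcs
  rwa [Real.sqrt_sq (Finset.sum_nonneg fun i _ => by positivity)] at this

lemma l4Shrink_norm_sq_le {d : ℕ} {τ : ℝ} (hτ : 0 < τ) (v : EuclideanSpace ℝ (Fin d)) :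
    ‖l4Shrink τ v‖ ^ 2 ≤ Real.sqrt d * τ ^ 2 := by
  have hN0 := l4Norm_nonneg v
  rcases eq_or_lt_of_le hN0 with h | h
  · have hz : l4Shrink τ v = 0 := by
      rw [l4Shrink, ← h, min_eq_left hτ.le]
      simp
    rw [hz]; simp; positivity
  · set N := l4Norm v with hN
    have key : ‖l4Shrink τ v‖ ^ 2 = (min N τ / N) ^ 2 * ‖v‖ ^ 2 := by
      rw [l4Shrink, norm_smul, mul_pow, Real.norm_eq_abs, sq_abs]
    rw [key]
    calc (min N τ / N) ^ 2 * ‖v‖ ^ 2 ≤ (min N τ / N) ^ 2 * (Real.sqrt d * N ^ 2) :=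
          mul_le_mul_of_nonneg_left (norm_sq_le_sqrt_mul v) (by positivity)
      _ = Real.sqrt d * (min N τ / N * N) ^ 2 := by ring
      _ = Real.sqrt d * (min N τ) ^ 2 := by rw [div_mul_cancel₀ _ h.ne']
      _ ≤ Real.sqrt d * τ ^ 2 := by
          have h1 : 0 ≤ min N τ := le_min hN0 hτ.le
          have h2 : min N τ ≤ τ := min_le_right _ _
          exact mul_le_mul_of_nonneg_left (pow_le_pow_left₀ h1 h2 2) (Real.sqrt_nonneg _)

/-- For the `ℓ₄`-shrunk vector `x̃`: (i) `‖x̃ x̃ᵀ‖₂ ≤ √d τ²` surely, and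
(ii) `‖E[(x̃ x̃ᵀ)²]‖₂ ≤ R d`, both expressed via quadratic forms over unit
vectors `ν` (for the rank-one matrix `x̃ x̃ᵀ`, `νᵀ(x̃ x̃ᵀ)ν = ⟨ν, x̃⟩²`, and
`νᵀ E[(x̃ x̃ᵀ)²] ν = E[⟨ν, x̃⟩² ‖x̃‖²]`). -/
theorem l4_shrinkage_matrix_norm_bounds
    {Ω : Type*} [MeasurableSpace Ω] (μ : Measure Ω) [IsProbabilityMeasure μ]
    {d : ℕ} (x : Ω → EuclideanSpace ℝ (Fin d)) (hmeas : Measurable x)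
    (R τ : ℝ) (hτ : 0 < τ)
    (hint4 : ∀ ν : EuclideanSpace ℝ (Fin d),
      Integrable (fun ω => (inner ℝ ν (x ω) : ℝ) ^ 4) μ)
    (h4 : ∀ ν : EuclideanSpace ℝ (Fin d), ‖ν‖ = 1 →
      ∫ ω, (inner ℝ ν (x ω) : ℝ) ^ 4 ∂μ ≤ R) :
    (∀ ω, ∀ ν : EuclideanSpace ℝ (Fin d), ‖ν‖ = 1 →
      (inner ℝ ν (l4Shrink τ (x ω)) : ℝ) ^ 2 ≤ Real.sqrt d * τ ^ 2) ∧
    (∀ ν : EuclideanSpace ℝ (Fin d), ‖ν‖ = 1 →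
      ∫ ω, (inner ℝ ν (l4Shrink τ (x ω)) : ℝ) ^ 2 * ‖l4Shrink τ (x ω)‖ ^ 2 ∂μ
        ≤ R * d) := by
  constructor
  · intro ω ν hν
    have h1 : |(inner ℝ ν (l4Shrink τ (x ω)) : ℝ)| ≤ ‖ν‖ * ‖l4Shrink τ (x ω)‖ :=
      abs_real_inner_le_norm ν _
    have h2 := l4Shrink_norm_sq_le (d := d) hτ (x ω)
    have h3 : (inner ℝ ν (l4Shrink τ (x ω)) : ℝ) ^ 2 ≤ ‖l4Shrink τ (x ω)‖ ^ 2 := by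
      rw [hν, one_mul] at h1
      nlinarith [abs_nonneg (inner ℝ ν (l4Shrink τ (x ω)) : ℝ), sq_abs (inner ℝ ν (l4Shrink τ (x ω)) : ℝ)]
    linarith
  · intro ν hν
    -- measurability
    have hxshr : Measurable fun ω => l4Shrink τ (x ω) := by
      have h1 : Measurable fun v : EuclideanSpace ℝ (Fin d) => l4Norm v := by
        simp only [l4Norm]
        exact (Real.continuous_rpow_const (by norm_num : (0:ℝ) ≤ 1/4)).measurable.comp
          (Finset.measurable_sum _ fun i _ => (((measurable_pi_apply i).comp (WithLp.measurable_ofLp 2 _)).abs.pow_const 4))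
      exact (((h1.min measurable_const).div h1).comp hmeas).smul hmeas
    have hinner : ∀ w : EuclideanSpace ℝ (Fin d), Measurable fun ω => (inner ℝ w (x ω) : ℝ) :=
      fun w => measurable_const.inner hmeas
    set f : Ω → ℝ := fun ω => (inner ℝ ν (l4Shrink τ (x ω)) : ℝ) ^ 2 * ‖l4Shrink τ (x ω)‖ ^ 2 with hf
    set g : Ω → ℝ := fun ω => (inner ℝ ν (x ω) : ℝ) ^ 2 * ‖x ω‖ ^ 2 with hg
    have hfg : ∀ ω, f ω ≤ g ω := by
      intro ω
      obtain ⟨hc0, hc1⟩ := coeff_mem (x ω) hτ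
      set c := min (l4Norm (x ω)) τ / l4Norm (x ω) with hc
      have e1 : (inner ℝ ν (l4Shrink τ (x ω)) : ℝ) = c * (inner ℝ ν (x ω) : ℝ) :=
        real_inner_smul_right ν (x ω) c
      have e2 : ‖l4Shrink τ (x ω)‖ = |c| * ‖x ω‖ := by
        rw [l4Shrink, norm_smul, Real.norm_eq_abs]
      show (inner ℝ ν (l4Shrink τ (x ω)) : ℝ) ^ 2 * ‖l4Shrink τ (x ω)‖ ^ 2 ≤ _
      rw [e1, e2]
      have hc4 : c ^ 4 ≤ 1 := pow_le_one₀ hc0 hc1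
      calc (c * (inner ℝ ν (x ω) : ℝ)) ^ 2 * (|c| * ‖x ω‖) ^ 2
          = c ^ 4 * ((inner ℝ ν (x ω) : ℝ) ^ 2 * ‖x ω‖ ^ 2) := by
            rw [mul_pow, mul_pow, sq_abs]; ring
        _ ≤ 1 * ((inner ℝ ν (x ω) : ℝ) ^ 2 * ‖x ω‖ ^ 2) :=
            mul_le_mul_of_nonneg_right hc4 (by positivity)
        _ = (inner ℝ ν (x ω) : ℝ) ^ 2 * ‖x ω‖ ^ 2 := one_mul _
    have hf0 : ∀ ω, 0 ≤ f ω := fun ω => by positivity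
    -- integrability of each coordinate term
    set e : Fin d → EuclideanSpace ℝ (Fin d) := fun j => EuclideanSpace.single j (1:ℝ) with he
    have hej : ∀ j, ‖e j‖ = 1 := fun j => by simp [he, EuclideanSpace.norm_single]
    have hxj : ∀ (j : Fin d) ω, x ω j = (inner ℝ (e j) (x ω) : ℝ) := fun j ω => by
      simp [he, EuclideanSpace.inner_single_left]
    set t : Fin d → Ω → ℝ := fun j ω => (inner ℝ ν (x ω) : ℝ) ^ 2 * (x ω j) ^ 2 with ht
    have htmeas : ∀ j, Measurable (t j) :=
      fun j => ((hinner ν).pow_const 2).mul ((((measurable_pi_apply j).comp (WithLp.measurable_ofLp 2 _)).comp hmeas).pow_const 2)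
    have hbound : ∀ j, Integrable (fun ω => ((inner ℝ ν (x ω) : ℝ) ^ 4 + (inner ℝ (e j) (x ω) : ℝ) ^ 4) / 2) μ :=
      fun j => ((hint4 ν).add (hint4 (e j))).div_const 2
    have htle : ∀ j ω, t j ω ≤ ((inner ℝ ν (x ω) : ℝ) ^ 4 + (inner ℝ (e j) (x ω) : ℝ) ^ 4) / 2 := by
      intro j ω
      have := hxj j ω
      simp only [ht, this]
      nlinarith [sq_nonneg ((inner ℝ ν (x ω) : ℝ) ^ 2 - (inner ℝ (e j) (x ω) : ℝ) ^ 2)]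
    have htint : ∀ j, Integrable (t j) μ := by
      intro j
      refine (hbound j).mono' (htmeas j).aestronglyMeasurable ?_
      filter_upwards with ω
      rw [Real.norm_eq_abs, abs_of_nonneg (by positivity)]
      exact htle j ω
    have htR : ∀ j, ∫ ω, t j ω ∂μ ≤ R := by
      intro j
      calc ∫ ω, t j ω ∂μ ≤ ∫ ω, ((inner ℝ ν (x ω) : ℝ) ^ 4 + (inner ℝ (e j) (x ω) : ℝ) ^ 4) / 2 ∂μ :=
            integral_mono (htint j) (hbound j) fun ω => htle j ω
        _ = ((∫ ω, (inner ℝ ν (x ω) : ℝ) ^ 4 ∂μ) + ∫ ω, (inner ℝ (e j) (x ω) : ℝ) ^ 4 ∂μ) / 2 := by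
            rw [integral_div, integral_add (hint4 ν) (hint4 (e j))]
        _ ≤ (R + R) / 2 := by
            have := h4 ν hν; have := h4 (e j) (hej j); linarith
        _ = R := by ring
    have hgsum : ∀ ω, g ω = ∑ j, t j ω := by
      intro ω
      simp only [hg, ht, euclid_norm_sq (x ω), Finset.mul_sum]
    have hgint : Integrable g μ := by
      have : Integrable (fun ω => ∑ j, t j ω) μ := integrable_finset_sum _ fun j _ => htint j
      exact this.congr (Filter.Eventually.of_forall fun ω => (hgsum ω).symm)
    have hfint : Integrable f μ := by
      refine hgint.mono' ?_ ?_
      · exact (((measurable_const.inner hxshr).pow_const 2).mul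
          (hxshr.norm.pow_const 2)).aestronglyMeasurable
      · filter_upwards with ω
        rw [Real.norm_eq_abs, abs_of_nonneg (hf0 ω)]
        exact hfg ω
    calc ∫ ω, f ω ∂μ ≤ ∫ ω, g ω ∂μ := integral_mono hfint hgint hfg
      _ = ∑ j, ∫ ω, t j ω ∂μ := by
          rw [integral_congr_ae (Filter.Eventually.of_forall hgsum)]
          exact integral_finset_sum _ fun j _ => htint j
      _ ≤ ∑ _j : Fin d, R := Finset.sum_le_sum fun j _ => htR j
      _ = R * d := by simp [mul_comm]
end
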